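/- arXiv:2504.11941 — 3 statements merged into one kernel-verified Lean document; each statement's English description precedes it below -/
import Mathlib

section
/- Let H be a d-uniform hypergraph and 1 ≤ k ≤ ν(H). Then (d−1)·aim(H,k) equals the maximum of |V(M)| − |M| over all generalized k-admissible matchings M of H. -/
open scoped Classical

variable {V : Type*} [DecidableEq V]

/-- A matching of a hypergraph with edge set `E`: a set of pairwise disjoint edges. -/
def IsMatching (E M : Finset (Finset V)) : Prop :=
  M ⊆ E ∧ ∀ e ∈ M, ∀ f ∈ M, e ≠ f → Disjoint e f

/-- The set of vertices covered by a set of edges. -/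
def verts (M : Finset (Finset V)) : Finset V := M.sup id

/-- Edge set of the induced sub-hypergraph on the vertex set `W`. -/
def inducedSub (E : Finset (Finset V)) (W : Finset V) : Finset (Finset V) :=
  E.filter (fun e => e ⊆ W)

/-- The matching number. -/
noncomputable def matchNum (E : Finset (Finset V)) : ℕ :=
  sSup {n : ℕ | ∃ M : Finset (Finset V), IsMatching E M ∧ M.card = n}

/-- `P` is a partition of the finite set `M` into nonempty pairwise disjoint parts. -/
def IsPartitionOf (M : Finset (Finset V)) (P : Finset (Finset (Finset V))) : Prop :=
  (∀ p ∈ P, p ≠ ∅) ∧ (∀ p ∈ P, ∀ q ∈ P, p ≠ q → Disjoint p q) ∧ P.sup id = M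

/-- A partition witnessing that `M` is a generalized `k`-admissible matching. -/
def GenAdmPartition (E M : Finset (Finset V)) (k : ℕ)
    (P : Finset (Finset (Finset V))) : Prop :=
  IsPartitionOf M P ∧
  (∀ e ∈ inducedSub E (verts M), ∃ p ∈ P, e ⊆ verts p) ∧
  k ≤ M.card ∧ M.card ≤ P.card + k - 1 ∧
  ∀ p ∈ P, ∀ M' : Finset (Finset V),
    IsMatching (inducedSub E (verts p)) M' → M'.card = p.card → verts M' = verts p

/-- Generalized `k`-admissible matching. -/
def IsGenAdmissible (E M : Finset (Finset V)) (k : ℕ) : Prop :=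
  IsMatching E M ∧ ∃ P, GenAdmPartition E M k P

/-- A partition witnessing that `M` is a `k`-admissible matching (d-uniform setting). -/
def AdmPartition (E M : Finset (Finset V)) (k : ℕ)
    (P : Finset (Finset (Finset V))) : Prop :=
  IsPartitionOf M P ∧
  (∀ e ∈ inducedSub E (verts M), ∃ p ∈ P, e ⊆ verts p) ∧
  M.card ≤ P.card + k - 1

/-- `k`-admissible matching. -/
def IsAdmissible (E M : Finset (Finset V)) (k : ℕ) : Prop :=
  IsMatching E M ∧ ∃ P, AdmPartition E M k P

/-- The `k`-admissible matching number `aim(H, k)`. -/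
noncomputable def aim (E : Finset (Finset V)) (k : ℕ) : ℕ :=
  sSup {n : ℕ | ∃ M : Finset (Finset V), IsAdmissible E M k ∧ M.card = n}

/-!
In a `d`-uniform hypergraph every matching `M` satisfies `|V(M)| - |M| = (d - 1)|M|`, so the
right-hand side is `d - 1` times the largest generalized `k`-admissible matching. The
generalized `k`-admissible matchings are exactly the `k`-admissible ones of size at least `k`:
the rigidity condition on the parts is automatic, since a matching of `H[V(Mᵢ)]` of size `|Mᵢ|`
covers `d|Mᵢ| = |V(Mᵢ)|` vertices. A matching of size `k ≤ ν(H)` is `k`-admissible with the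
one-part partition, so a largest `k`-admissible matching has size at least `k`.
-/

omit [DecidableEq V] in
lemma IsMatching.mono_left {E F M : Finset (Finset V)} (hEF : E ⊆ F) (hM : IsMatching E M) :
    IsMatching F M :=
  ⟨hM.1.trans hEF, hM.2⟩

omit [DecidableEq V] in
lemma IsMatching.mono_right {E M N : Finset (Finset V)} (hNM : N ⊆ M) (hM : IsMatching E M) :
    IsMatching E N :=
  ⟨hNM.trans hM.1, fun e he f hf => hM.2 e (hNM he) f (hNM hf)⟩

omit [DecidableEq V] in
lemma IsMatching.card_le {E M : Finset (Finset V)} (hM : IsMatching E M) : M.card ≤ E.card :=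
  Finset.card_le_card hM.1

lemma IsMatching.card_verts {E M : Finset (Finset V)} {d : ℕ} (hunif : ∀ e ∈ E, e.card = d)
    (hM : IsMatching E M) : (verts M).card = d * M.card := by
  rw [verts, Finset.sup_eq_biUnion, Finset.card_biUnion (t := id) hM.2,
    Finset.sum_congr rfl fun e he => (hunif e (hM.1 he) : (id e).card = d),
    Finset.sum_const, smul_eq_mul, mul_comm]

lemma IsMatching.card_verts_sub_card {E M : Finset (Finset V)} {d : ℕ}
    (hunif : ∀ e ∈ E, e.card = d) (hM : IsMatching E M) :
    (verts M).card - M.card = (d - 1) * M.card := by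
  rw [hM.card_verts hunif, Nat.sub_one_mul]

lemma verts_subset_of_subset_inducedSub {E M : Finset (Finset V)} {W : Finset V}
    (hM : M ⊆ inducedSub E W) : verts M ⊆ W :=
  Finset.sup_le fun _ he => (Finset.mem_filter.mp (hM he)).2

omit [DecidableEq V] in
lemma exists_isMatching_card_eq {E : Finset (Finset V)} {n : ℕ} (hn : n ≤ matchNum E) :
    ∃ M, IsMatching E M ∧ M.card = n := by
  have hbdd : BddAbove {n : ℕ | ∃ M, IsMatching E M ∧ M.card = n} := by
    refine ⟨E.card, ?_⟩
    rintro _ ⟨M, hM, rfl⟩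
    exact hM.card_le
  have hempty : IsMatching E ∅ := ⟨Finset.empty_subset E, by simp⟩
  obtain ⟨M, hM, hM_card⟩ := Nat.sSup_mem (by exact ⟨0, ∅, hempty, rfl⟩) hbdd
  obtain ⟨N, hNM, hN_card⟩ := Finset.exists_subset_card_eq (hM_card.symm ▸ hn : n ≤ M.card)
  exact ⟨N, hM.mono_right hNM, hN_card⟩

lemma isAdmissible_of_card_le {E M : Finset (Finset V)} {k : ℕ} (hM : IsMatching E M)
    (hne : M.Nonempty) (hk : M.card ≤ k) : IsAdmissible E M k := by
  refine ⟨hM, {M}, ⟨?_, ?_, by simp⟩, ?_, by simpa using hk⟩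
  · simpa using hne.ne_empty
  · simp
  · intro e he
    exact ⟨M, Finset.mem_singleton_self M, (Finset.mem_filter.mp he).2⟩

lemma IsGenAdmissible.isAdmissible {E M : Finset (Finset V)} {k : ℕ}
    (hM : IsGenAdmissible E M k) : IsAdmissible E M k :=
  let ⟨hmatch, P, hpart, hcover, _, hbound, _⟩ := hM
  ⟨hmatch, P, hpart, hcover, hbound⟩

lemma IsAdmissible.isGenAdmissible {E M : Finset (Finset V)} {d k : ℕ}
    (hunif : ∀ e ∈ E, e.card = d) (hM : IsAdmissible E M k) (hk : k ≤ M.card) :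
    IsGenAdmissible E M k := by
  obtain ⟨hmatch, P, hpart, hcover, hbound⟩ := hM
  refine ⟨hmatch, P, hpart, hcover, hk, hbound, fun p hp M' hM' hcard => ?_⟩
  have hpM : p ⊆ M := hpart.2.2 ▸ Finset.le_sup (f := id) hp
  refine Finset.eq_of_subset_of_card_le (verts_subset_of_subset_inducedSub hM'.1) ?_
  rw [(hM'.mono_left (Finset.filter_subset _ E)).card_verts hunif,
    (hmatch.mono_right hpM).card_verts hunif, hcard]

section aim

variable {E M : Finset (Finset V)} {k : ℕ}

lemma bddAbove_card_isAdmissible :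
    BddAbove {n : ℕ | ∃ M, IsAdmissible E M k ∧ M.card = n} := by
  refine ⟨E.card, ?_⟩
  rintro _ ⟨M, hM, rfl⟩
  exact hM.1.card_le

lemma IsAdmissible.card_le_aim (hM : IsAdmissible E M k) : M.card ≤ aim E k :=
  le_csSup bddAbove_card_isAdmissible ⟨M, hM, rfl⟩

lemma IsAdmissible.exists_card_eq_aim (hM : IsAdmissible E M k) :
    ∃ M₀, IsAdmissible E M₀ k ∧ M₀.card = aim E k :=
  Nat.sSup_mem (by exact ⟨_, M, hM, rfl⟩) bddAbove_card_isAdmissible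

lemma exists_isAdmissible_card_eq (hk1 : 1 ≤ k) (hk2 : k ≤ matchNum E) :
    ∃ M, IsAdmissible E M k ∧ M.card = k := by
  obtain ⟨M, hM, hM_card⟩ := exists_isMatching_card_eq hk2
  have hne : M.Nonempty := Finset.card_pos.mp (by omega)
  exact ⟨M, isAdmissible_of_card_le hM hne hM_card.le, hM_card⟩

end aim

theorem aim_eq_max_genAdmissible_general (E : Finset (Finset V)) (d k : ℕ)
    (hunif : ∀ e ∈ E, e.card = d) (hk1 : 1 ≤ k) (hk2 : k ≤ matchNum E) :
    (d - 1) * aim E k =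
      sSup {t : ℕ | ∃ M : Finset (Finset V),
        IsGenAdmissible E M k ∧ t = (verts M).card - M.card} := by
  obtain ⟨Mk, hMk, hMk_card⟩ := exists_isAdmissible_card_eq hk1 hk2
  obtain ⟨M₀, hM₀, hM₀_card⟩ := hMk.exists_card_eq_aim
  have hM₀_gen : IsGenAdmissible E M₀ k :=
    hM₀.isGenAdmissible hunif (hM₀_card ▸ hMk_card ▸ hMk.card_le_aim)
  refine (IsGreatest.csSup_eq ?_).symm
  refine ⟨⟨M₀, hM₀_gen, ?_⟩, ?_⟩
  · rw [hM₀.1.card_verts_sub_card hunif, hM₀_card]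
  · rintro _ ⟨M, hM, rfl⟩
    rw [hM.1.card_verts_sub_card hunif]
    exact Nat.mul_le_mul_left _ hM.isAdmissible.card_le_aim

/-- For a `d`-uniform hypergraph, `(d-1) · aim(H,k)` is the maximum of `|V(M)| - |M|`
over all generalized `k`-admissible matchings `M`. -/
theorem aim_eq_max_genAdmissible (E : Finset (Finset V)) (d k : ℕ) (hd : 1 ≤ d)
    (hunif : ∀ e ∈ E, e.card = d) (hk1 : 1 ≤ k) (hk2 : k ≤ matchNum E) :
    (d - 1) * aim E k =
      sSup {t : ℕ | ∃ M : Finset (Finset V),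
        IsGenAdmissible E M k ∧ t = (verts M).card - M.card} :=
  aim_eq_max_genAdmissible_general E d k hunif hk1 hk2
end

section
/- Let G be a chordal graph with edge {x,y}, and let G~ be the graph on V(G) \ {x,y} whose edges are the edges of G \ {x,y} together with all pairs {u,v} with u ∈ N_G(x)\{y}, v ∈ N_G(y)\{x}, u ≠ v. Then G~ is weakly chordal: neither G~ nor its complement contains an induced cycle of length ≥ 5. -/
open scoped Classical

variable {V : Type*} [DecidableEq V]

/-- `G` has an induced cycle on `n` vertices. -/
def HasInducedCycle {W : Type*} (G : SimpleGraph W) (n : ℕ) : Prop :=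
  ∃ f : Fin n → W, Function.Injective f ∧
    ∀ i j : Fin n, G.Adj (f i) (f j) ↔ ((j : ℕ) = ((i : ℕ) + 1) % n ∨ (i : ℕ) = ((j : ℕ) + 1) % n)

/-- A graph is chordal if it has no induced cycle of length at least `4`. -/
def Chordal {W : Type*} (G : SimpleGraph W) : Prop :=
  ∀ n : ℕ, 4 ≤ n → ¬ HasInducedCycle G n

/-- The graph `G~` associated to the edge `{x,y}` of `G`: its vertices are those of `G`
other than `x, y`; its edges are the edges of `G \ {x,y}` together with all pairs `{u,v}`
with `u ∈ N_G(x) \ {y}`, `v ∈ N_G(y) \ {x}`, `u ≠ v`.  (Here it is realized as a graph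
on the vertex set of `G` in which `x` and `y` are isolated.) -/
def tildeGraph (G : SimpleGraph V) (x y : V) : SimpleGraph V :=
  SimpleGraph.fromRel (fun u v =>
    u ≠ x ∧ u ≠ y ∧ v ≠ x ∧ v ≠ y ∧ (G.Adj u v ∨ (G.Adj x u ∧ G.Adj y v)))

/-!
Write `A` and `B` for the neighbourhoods of `x` and `y` in `G`; an edge of `G~` is an edge of
`G` or joins a vertex of `A` to a vertex of `B`. Everything rests on one property of chordal
graphs: if both ends of an induced path with at least three vertices are adjacent to a vertex
`z` off the path, or to the two ends of an edge `z₁z₂` off the path, then `z` (resp. `z₁` or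
`z₂`) is adjacent to an interior vertex of the path, since otherwise they close up into a hole.

A hole of `G~` of length `≥ 5` has an edge `uv` outside `G` (else it is a hole of `G`), with
`u ∈ A` and `v ∈ B`. Any other vertex of `A` on the hole is a `G~`-neighbour of `v`, and any
other vertex of `B` one of `u`; so the rest of the hole is an induced path of `G` whose ends are
seen by `x` or `y` and whose interior is seen by neither.

In an antihole `C` of `G~`, i.e. a hole of its complement, consecutive vertices are
non-adjacent in `G` and never form an `A`–`B` pair, while the other pairs are adjacent in `G` or
form an `A`–`B` pair. The pentagon is self-complementary, so let `C` have length `≥ 6`. If all non-consecutive pairs are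
edges of `G`, four vertices of `C` form a hole of `G`. Otherwise take non-consecutive `u ∈ A`,
`v ∈ B` non-adjacent in `G`. A vertex of `C` outside `A ∪ B` is adjacent in `G` to all vertices
of `C` not next to it, so it must lie next to `u` or `v`; and each of the two arcs of `C` from
`u` to `v` contains such a vertex, since `A` and `B` cannot meet across an edge of `C`. One such
vertex next to `u` and one next to `v` give an induced path `u w w' v`. If instead both lie next
to `u`, all vertices between them are on the same side, `A` or `B`, and four vertices around
them form a hole of `G`; if both lie next to `v`, exchange the roles of `x` and `y`.
-/

section CycleSequences

variable {W : Type*}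

-- Cycles and paths are indexed by `ℕ` (only the values below the length matter), so that
-- all index arithmetic is linear and within reach of `omega`.
def CycAdj (n a b : ℕ) : Prop :=
  a + 1 = b ∨ b + 1 = a ∨ (a + 1 = n ∧ b = 0) ∨ (b + 1 = n ∧ a = 0)

def IsInducedCycleSeq (G : SimpleGraph W) (n : ℕ) (f : ℕ → W) : Prop :=
  (∀ a < n, ∀ b < n, f a = f b → a = b) ∧
    ∀ a < n, ∀ b < n, (G.Adj (f a) (f b) ↔ CycAdj n a b)

def IsInducedPathSeq (G : SimpleGraph W) (m : ℕ) (p : ℕ → W) : Prop :=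
  (∀ a ≤ m, ∀ b ≤ m, p a = p b → a = b) ∧ (∀ k < m, G.Adj (p k) (p (k + 1))) ∧
    ∀ a b, a + 1 < b → b ≤ m → ¬G.Adj (p a) (p b)

lemma cycAdj_comm {n a b : ℕ} : CycAdj n a b ↔ CycAdj n b a := by
  unfold CycAdj; omega

lemma eq_succ_mod_iff {n a b : ℕ} (ha : a < n) (hb : b < n) :
    b = (a + 1) % n ↔ a + 1 = b ∨ (a + 1 = n ∧ b = 0) := by
  rcases Nat.lt_or_ge (a + 1) n with h | h
  · rw [Nat.mod_eq_of_lt h]; omega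
  · rw [show a + 1 = n by omega, Nat.mod_self]; omega

lemma cycAdj_add_mod {n a b i : ℕ} (ha : a < n) (hb : b < n) (hi : i < n) :
    CycAdj n ((a + i) % n) ((b + i) % n) ↔ CycAdj n a b := by
  rw [Nat.add_mod_eq_ite, Nat.add_mod_eq_ite (m := b), Nat.mod_eq_of_lt ha,
    Nat.mod_eq_of_lt hb, Nat.mod_eq_of_lt hi]
  unfold CycAdj
  split_ifs <;> omega

lemma sub_one_add_mod_of_succ {n a b : ℕ} (ha : a < n) (h : a + 1 = b ∨ a + 1 = n ∧ b = 0) :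
    (n - 1 + b) % n = a := by
  rcases h with rfl | ⟨h, rfl⟩
  · rw [show n - 1 + (a + 1) = a + n by omega, Nat.add_mod_right, Nat.mod_eq_of_lt ha]
  · rw [Nat.mod_eq_of_lt (by omega)]; omega

lemma add_sub_mod_add_mod {n a b : ℕ} (ha : a < n) (hb : b < n) :
    ((b + n - a) % n + a) % n = b := by
  rcases Nat.lt_or_ge b a with h | h
  · rw [Nat.mod_eq_of_lt (a := b + n - a) (by omega), show b + n - a + a = b + n by omega,
      Nat.add_mod_right, Nat.mod_eq_of_lt hb]
  · rw [show b + n - a = b - a + n by omega, Nat.add_mod_right,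
      Nat.mod_eq_of_lt (a := b - a) (by omega), Nat.sub_add_cancel h, Nat.mod_eq_of_lt hb]

namespace IsInducedCycleSeq

variable {G : SimpleGraph W} {n : ℕ} {f : ℕ → W}

lemma hasInducedCycle (hf : IsInducedCycleSeq G n f) : HasInducedCycle G n := by
  refine ⟨fun i => f i, fun i j h => Fin.ext (hf.1 _ i.2 _ j.2 h), fun i j => ?_⟩
  rw [hf.2 _ i.2 _ j.2, eq_succ_mod_iff i.2 j.2, eq_succ_mod_iff j.2 i.2, CycAdj]
  omega

lemma map {W' : Type*} {G' : SimpleGraph W'} (hf : IsInducedCycleSeq G n f) (φ : G ↪g G') :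
    IsInducedCycleSeq G' n (φ ∘ f) :=
  ⟨fun a ha b hb h => hf.1 a ha b hb (φ.injective h),
    fun a ha b hb => (φ.map_adj_iff).trans (hf.2 a ha b hb)⟩

lemma rotate (hf : IsInducedCycleSeq G n f) {i : ℕ} (hi : i < n) :
    IsInducedCycleSeq G n (fun k => f ((k + i) % n)) := by
  have hn : 0 < n := by omega
  refine ⟨fun a ha b hb h => ?_, fun a ha b hb => ?_⟩
  · have h' := hf.1 _ (Nat.mod_lt _ hn) _ (Nat.mod_lt _ hn) h
    rw [Nat.add_mod_eq_ite, Nat.add_mod_eq_ite (m := b), Nat.mod_eq_of_lt ha,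
      Nat.mod_eq_of_lt hb, Nat.mod_eq_of_lt hi] at h'
    split_ifs at h' <;> omega
  · exact (hf.2 _ (Nat.mod_lt _ hn) _ (Nat.mod_lt _ hn)).trans (cycAdj_add_mod ha hb hi)

lemma apply_ne (hf : IsInducedCycleSeq G n f) {a b : ℕ} (ha : a < n) (hb : b < n)
    (hab : a ≠ b) : f a ≠ f b :=
  fun h => hab (hf.1 a ha b hb h)

lemma adj_iff_of_compl (hf : IsInducedCycleSeq Gᶜ n f) {a b : ℕ} (ha : a < n) (hb : b < n)
    (hab : a ≠ b) : G.Adj (f a) (f b) ↔ ¬CycAdj n a b := by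
  have := hf.apply_ne ha hb hab
  rw [← hf.2 a ha b hb, SimpleGraph.compl_adj]
  tauto

-- The complement of the pentagon `0 1 2 3 4` is the pentagon `0 2 4 1 3`.
lemma of_compl_five (hf : IsInducedCycleSeq Gᶜ 5 f) :
    IsInducedCycleSeq G 5 (fun k => f (2 * k % 5)) := by
  refine ⟨fun a ha b hb h => ?_, fun a ha b hb => ?_⟩
  · have := hf.1 _ (Nat.mod_lt _ (by norm_num)) _ (Nat.mod_lt _ (by norm_num)) h
    omega
  · have hlt : ∀ k, 2 * k % 5 < 5 := fun k => Nat.mod_lt _ (by norm_num)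
    by_cases hab : a = b
    · subst hab
      simp only [SimpleGraph.irrefl, false_iff, CycAdj]
      omega
    · rw [hf.adj_iff_of_compl (hlt a) (hlt b) (by omega), CycAdj, CycAdj]
      interval_cases a <;> interval_cases b <;> simp_all

end IsInducedCycleSeq

lemma HasInducedCycle.exists_isInducedCycleSeq {G : SimpleGraph W} {n : ℕ} (hn : 0 < n)
    (h : HasInducedCycle G n) : ∃ f : ℕ → W, IsInducedCycleSeq G n f := by
  obtain ⟨g, hinj, hadj⟩ := h
  refine ⟨fun k => g ⟨k % n, Nat.mod_lt _ hn⟩, fun a ha b hb h => ?_, fun a ha b hb => ?_⟩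
  · simpa [Nat.mod_eq_of_lt ha, Nat.mod_eq_of_lt hb] using hinj h
  · have := hadj ⟨a, ha⟩ ⟨b, hb⟩
    simp only [Nat.mod_eq_of_lt ha, Nat.mod_eq_of_lt hb] at this ⊢
    rw [this, eq_succ_mod_iff ha hb, eq_succ_mod_iff hb ha, CycAdj]
    omega

lemma Chordal.not_isInducedCycleSeq {G : SimpleGraph W} (hG : Chordal G) {n : ℕ} (hn : 4 ≤ n)
    {f : ℕ → W} (hf : IsInducedCycleSeq G n f) : False :=
  hG n hn hf.hasInducedCycle

end CycleSequences

section PathSequences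

variable {W : Type*} {G : SimpleGraph W}

lemma IsInducedPathSeq.adj_iff {m : ℕ} {p : ℕ → W}
    (hp : IsInducedPathSeq G m p) {a b : ℕ} (ha : a ≤ m) (hb : b ≤ m) :
    G.Adj (p a) (p b) ↔ a + 1 = b ∨ b + 1 = a := by
  refine ⟨fun h => ?_, ?_⟩
  · by_contra! hab
    rcases lt_trichotomy a b with hab' | rfl | hab'
    · exact hp.2.2 a b (by omega) hb h
    · exact G.loopless.irrefl _ h
    · exact hp.2.2 b a (by omega) ha h.symm
  · rintro (rfl | rfl)
    · exact hp.2.1 a (by omega)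
    · exact (hp.2.1 b (by omega)).symm

lemma IsInducedPathSeq.cons {m : ℕ} {p : ℕ → W} (hp : IsInducedPathSeq G m p) {z : W}
    (hz : ∀ k ≤ m, p k ≠ z) (h0 : G.Adj z (p 0)) (hk : ∀ k, 0 < k → k ≤ m → ¬G.Adj z (p k)) :
    IsInducedPathSeq G (m + 1) (fun k => if k = 0 then z else p (k - 1)) := by
  refine ⟨fun a ha b hb h => ?_, fun k hk' => ?_, fun a b hab hb => ?_⟩
  · rcases Nat.eq_zero_or_pos a with rfl | ha0 <;> rcases Nat.eq_zero_or_pos b with rfl | hb0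
    · rfl
    · simp only [hb0.ne', ↓reduceIte] at h
      exact absurd h.symm (hz _ (by omega))
    · simp only [ha0.ne', ↓reduceIte] at h
      exact absurd h (hz _ (by omega))
    · simp only [ha0.ne', hb0.ne', ↓reduceIte] at h
      have := hp.1 _ (by omega) _ (by omega) h
      omega
  · rcases Nat.eq_zero_or_pos k with rfl | hk0
    · simpa using h0
    · simpa [hk0.ne', Nat.sub_add_cancel hk0] using hp.2.1 (k - 1) (by omega)
  · rcases Nat.eq_zero_or_pos a with rfl | ha0
    · simpa [show b ≠ 0 by omega] using hk (b - 1) (by omega) (by omega)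
    · simpa [show a ≠ 0 by omega, show b ≠ 0 by omega] using
        hp.2.2 (a - 1) (b - 1) (by omega) (by omega)

lemma isInducedPathSeq_three {u v w : W} (huv : G.Adj u v) (hvw : G.Adj v w)
    (huw : ¬G.Adj u w) (hne : u ≠ w) : IsInducedPathSeq G 2 (fun k => [u, v, w].getD k u) := by
  refine ⟨fun a ha b hb h => ?_, fun k hk => ?_, fun a b hab hb => ?_⟩
  · interval_cases a <;> interval_cases b <;> simp_all [huv.ne, hvw.ne, eq_comm]
  · interval_cases k <;> simpa
  · have ha : a < b := by omega
    interval_cases b <;> interval_cases a <;> first | omega | simpa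

lemma isInducedPathSeq_four {u v w t : W} (huv : G.Adj u v) (hvw : G.Adj v w) (hwt : G.Adj w t)
    (huw : ¬G.Adj u w) (hut : ¬G.Adj u t) (hvt : ¬G.Adj v t) (huw' : u ≠ w) (hut' : u ≠ t)
    (hvt' : v ≠ t) : IsInducedPathSeq G 3 (fun k => [u, v, w, t].getD k u) := by
  refine ⟨fun a ha b hb h => ?_, fun k hk => ?_, fun a b hab hb => ?_⟩
  · interval_cases a <;> interval_cases b <;> simp_all [huv.ne, hvw.ne, hwt.ne, eq_comm]
  · interval_cases k <;> simpa
  · have ha : a < b := by omega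
    interval_cases b <;> interval_cases a <;> first | omega | simpa

lemma isInducedPathSeq_segment {f : ℕ → W} {n s e : ℕ}
    (hse : s ≤ e) (he : e < n) (hinj : ∀ a < n, ∀ b < n, f a = f b → a = b)
    (hcyc : ∀ a < n, ∀ b < n, G.Adj (f a) (f b) → CycAdj n a b)
    (hwrap : ¬G.Adj (f 0) (f (n - 1))) (hcons : ∀ k, s ≤ k → k < e → G.Adj (f k) (f (k + 1))) :
    IsInducedPathSeq G (e - s) (fun k => f (s + k)) := by
  refine ⟨fun a ha b hb h => ?_, fun k hk => ?_, fun a b hab hb h => ?_⟩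
  · have := hinj _ (by omega) _ (by omega) h
    omega
  · exact hcons (s + k) (by omega) (by omega)
  · have h' := hcyc _ (by omega) _ (by omega) h
    unfold CycAdj at h'
    dsimp only at h
    rw [show s + a = 0 by omega, show s + b = n - 1 by omega] at h
    exact hwrap h

lemma exists_neither_between {A B : ℕ → Prop} {s t : ℕ} (hA : A s) (hB : B t) (hst : s < t)
    (h : ∀ k, s ≤ k → k < t → ¬(A k ∧ B (k + 1))) : ∃ k, s < k ∧ k < t ∧ ¬A k ∧ ¬B k := by
  induction t with
  | zero => omega
  | succ t ih =>
    have hAt : ¬A t := fun hAt => h t (by omega) (by omega) ⟨hAt, hB⟩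
    have hts : s ≠ t := fun hts => hAt (hts ▸ hA)
    by_cases hBt : B t
    · obtain ⟨k, hk⟩ := ih hBt (by omega) fun k hk hk' => h k hk (by omega)
      exact ⟨k, hk.1, by omega, hk.2.2⟩
    · exact ⟨t, by omega, by omega, hAt, hBt⟩

end PathSequences

namespace Chordal

variable {W : Type*} {G : SimpleGraph W}

lemma exists_interior_adj_of_adj_ends (hG : Chordal G) {m : ℕ} {p : ℕ → W}
    (hp : IsInducedPathSeq G m p) (hm : 2 ≤ m) {z : W} (hz : ∀ k ≤ m, p k ≠ z)
    (h0 : G.Adj z (p 0)) (hm' : G.Adj z (p m)) : ∃ k, 0 < k ∧ k < m ∧ G.Adj z (p k) := by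
  by_contra! H
  have hzp : ∀ a ≤ m, (G.Adj z (p a) ↔ a = 0 ∨ a = m) := fun a ha => by
    refine ⟨fun h => ?_, by rintro (rfl | rfl) <;> assumption⟩
    by_contra h'
    exact H a (by omega) (by omega) h
  apply hG.not_isInducedCycleSeq (show 4 ≤ m + 2 by omega)
    (f := fun k => if k ≤ m then p k else z)
  refine ⟨fun a ha b hb h => ?_, fun a ha b hb => ?_⟩
  · by_cases ham : a ≤ m <;> by_cases hbm : b ≤ m <;> simp only [ham, hbm, if_true, if_false] at h
    · exact hp.1 a ham b hbm h
    · exact absurd h (hz a ham)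
    · exact absurd h.symm (hz b hbm)
    · omega
  · by_cases ham : a ≤ m <;> by_cases hbm : b ≤ m <;> simp only [ham, hbm, if_true, if_false]
    · rw [hp.adj_iff ham hbm, CycAdj]; omega
    · rw [G.adj_comm, hzp a ham, CycAdj]; omega
    · rw [hzp b hbm, CycAdj]; omega
    · simp only [SimpleGraph.irrefl, false_iff, CycAdj]; omega

lemma exists_interior_adj_of_edge_adj_ends (hG : Chordal G) {m : ℕ} {p : ℕ → W}
    (hp : IsInducedPathSeq G m p) (hm : 2 ≤ m) {z₁ z₂ : W} (hz₁ : ∀ k ≤ m, p k ≠ z₁)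
    (hz₂ : ∀ k ≤ m, p k ≠ z₂) (hz : G.Adj z₁ z₂) (h₁ : G.Adj z₁ (p 0)) (h₂ : G.Adj z₂ (p m)) :
    ∃ k, 0 < k ∧ k < m ∧ (G.Adj z₁ (p k) ∨ G.Adj z₂ (p k)) := by
  by_contra! H
  by_cases h₁m : G.Adj z₁ (p m)
  · obtain ⟨k, hk0, hkm, hk⟩ := hG.exists_interior_adj_of_adj_ends hp hm hz₁ h₁ h₁m
    exact (H k hk0 hkm).1 hk
  by_cases h₂0 : G.Adj z₂ (p 0)
  · obtain ⟨k, hk0, hkm, hk⟩ := hG.exists_interior_adj_of_adj_ends hp hm hz₂ h₂0 h₂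
    exact (H k hk0 hkm).2 hk
  -- Otherwise `z₁, p 0, …, p m` is an induced path whose ends both see `z₂`.
  have hq := hp.cons hz₁ h₁ fun k hk0 hkm =>
    (Nat.lt_or_ge k m).elim (fun hk => (H k hk0 hk).1) fun hk => (le_antisymm hkm hk) ▸ h₁m
  obtain ⟨k, hk0, hkm, hk⟩ := hG.exists_interior_adj_of_adj_ends hq (by omega)
    (fun k hk => by
      split_ifs
      · exact hz.ne
      · exact hz₂ _ (by omega))
    (by simpa using hz.symm) (by simpa using h₂)
  simp only [hk0.ne', ↓reduceIte] at hk
  rcases Nat.eq_zero_or_pos (k - 1) with hk1 | hk1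
  · exact h₂0 (hk1 ▸ hk)
  · exact (H (k - 1) hk1 (by omega)).2 hk

lemma adj_or_adj_of_cycle_four (hG : Chordal G) {a b c d : W} (hab : G.Adj a b)
    (hbc : G.Adj b c) (hcd : G.Adj c d) (hda : G.Adj d a) (hac : a ≠ c) (hbd : b ≠ d) :
    G.Adj a c ∨ G.Adj b d := by
  by_contra! H
  obtain ⟨k, hk0, hk2, hk⟩ := hG.exists_interior_adj_of_adj_ends
    (isInducedPathSeq_three hab hbc H.1 hac) le_rfl
    (z := d) (fun k hk => by interval_cases k <;> simp [hda.ne', hbd, hcd.ne]) hda hcd.symm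
  obtain rfl : k = 1 := by omega
  exact H.2 (by simpa using hk.symm)

end Chordal

section TildeGraph

variable {W : Type*} {G : SimpleGraph W} {x y : W}

lemma tildeGraph_comm (G : SimpleGraph W) (x y : W) : tildeGraph G x y = tildeGraph G y x := by
  ext u v
  simp only [tildeGraph, SimpleGraph.fromRel_adj]
  constructor <;> rintro ⟨hne, h⟩ <;> refine ⟨hne, ?_⟩ <;> grind [SimpleGraph.adj_comm]

lemma tildeGraph_adj {u v : W} (hu : u ≠ x ∧ u ≠ y) (hv : v ≠ x ∧ v ≠ y) :
    (tildeGraph G x y).Adj u v ↔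
      u ≠ v ∧ (G.Adj u v ∨ G.Adj x u ∧ G.Adj y v ∨ G.Adj x v ∧ G.Adj y u) := by
  simp only [tildeGraph, SimpleGraph.fromRel_adj]
  grind [SimpleGraph.adj_comm]

variable {n : ℕ} {f : ℕ → W}

namespace IsInducedCycleSeq

lemma adj_or_cross_iff_of_tildeGraph (hf : IsInducedCycleSeq (tildeGraph G x y) n f)
    (hS : ∀ k, f k ≠ x ∧ f k ≠ y) {a b : ℕ} (ha : a < n) (hb : b < n) (hab : a ≠ b) :
    (G.Adj (f a) (f b) ∨ G.Adj x (f a) ∧ G.Adj y (f b) ∨ G.Adj x (f b) ∧ G.Adj y (f a)) ↔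
      CycAdj n a b := by
  rw [← hf.2 a ha b hb, tildeGraph_adj (hS a) (hS b)]
  have := hf.apply_ne ha hb hab
  tauto

lemma eq_or_cycAdj_of_tildeGraph (hf : IsInducedCycleSeq (tildeGraph G x y) n f)
    (hS : ∀ k, f k ≠ x ∧ f k ≠ y) {a b : ℕ} (ha : a < n) (hb : b < n) (hxa : G.Adj x (f a))
    (hyb : G.Adj y (f b)) : a = b ∨ CycAdj n a b :=
  or_iff_not_imp_left.2 fun hab =>
    (hf.adj_or_cross_iff_of_tildeGraph hS ha hb hab).1 (.inr (.inl ⟨hxa, hyb⟩))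

lemma isInducedPathSeq_of_cross_last_zero (hf : IsInducedCycleSeq (tildeGraph G x y) n f)
    (hS : ∀ k, f k ≠ x ∧ f k ≠ y) (hn : 5 ≤ n) (hx : G.Adj x (f (n - 1))) (hy : G.Adj y (f 0))
    (hwrap : ¬G.Adj (f 0) (f (n - 1))) {s e : ℕ} (hs : s ≤ 1) (he : n - 2 ≤ e) (he' : e < n)
    (hs0 : s = 0 → ¬G.Adj x (f 1)) (he1 : e = n - 1 → ¬G.Adj y (f (n - 2))) :
    IsInducedPathSeq G (e - s) (fun k => f (s + k)) := by
  have hA : ∀ k < n, G.Adj x (f k) → k = n - 1 ∨ k = 0 ∨ k = 1 := fun k hk h => by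
    have := hf.eq_or_cycAdj_of_tildeGraph hS hk (by omega) h hy; unfold CycAdj at this; omega
  have hB : ∀ k < n, G.Adj y (f k) → k = n - 2 ∨ k = n - 1 ∨ k = 0 := fun k hk h => by
    have := hf.eq_or_cycAdj_of_tildeGraph hS (by omega) hk hx h; unfold CycAdj at this; omega
  refine isInducedPathSeq_segment (by omega) he' hf.1 (fun a ha b hb h => ?_) hwrap
    fun k hk hk' => ?_
  · exact (hf.adj_or_cross_iff_of_tildeGraph hS ha hb fun hab => h.ne (congrArg f hab)).1 (.inl h)
  rcases (hf.adj_or_cross_iff_of_tildeGraph hS (a := k) (b := k + 1) (by omega) (by omega)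
    (by omega)).2 (by unfold CycAdj; omega) with h | ⟨hxk, hyk⟩ | ⟨hxk, hyk⟩
  · exact h
  · have := hA k (by omega) hxk; have := hB (k + 1) (by omega) hyk; omega
  · rcases hA (k + 1) (by omega) hxk with h | h | h
    · exact absurd (by rwa [show k = n - 2 by omega] at hyk) (he1 (by omega))
    · omega
    · exact absurd (by rwa [h] at hxk) (hs0 (by omega))

end IsInducedCycleSeq

namespace Chordal

lemma not_isInducedCycleSeq_tildeGraph_of_cross_last_zero (hG : Chordal G)
    (hxy : G.Adj x y) (hn : 5 ≤ n) (hS : ∀ k, f k ≠ x ∧ f k ≠ y)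
    (hf : IsInducedCycleSeq (tildeGraph G x y) n f) (hx : G.Adj x (f (n - 1)))
    (hy : G.Adj y (f 0)) (hwrap : ¬G.Adj (f 0) (f (n - 1))) : False := by
  have hA : ∀ k < n, G.Adj x (f k) → k = n - 1 ∨ k = 0 ∨ k = 1 := fun k hk h => by
    have := hf.eq_or_cycAdj_of_tildeGraph hS hk (by omega) h hy; unfold CycAdj at this; omega
  have hB : ∀ k < n, G.Adj y (f k) → k = n - 2 ∨ k = n - 1 ∨ k = 0 := fun k hk h => by
    have := hf.eq_or_cycAdj_of_tildeGraph hS (by omega) hk hx h; unfold CycAdj at this; omega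
  have hpath := fun s e (hs : s ≤ 1) (he : n - 2 ≤ e) (he' : e < n) hs0 he1 =>
    hf.isInducedPathSeq_of_cross_last_zero hS hn hx hy hwrap hs he he' hs0 he1
  -- The path starts at `f 1` if `x` sees it and at `f 0` otherwise, and ends at `f (n - 2)` if
  -- `y` sees it and at `f (n - 1)` otherwise.
  by_cases hA1 : G.Adj x (f 1) <;> by_cases hBn : G.Adj y (f (n - 2))
  · obtain ⟨k, hk0, hkm, hk⟩ := hG.exists_interior_adj_of_edge_adj_ends
      (hpath 1 (n - 2) le_rfl le_rfl (by omega) (by omega) (by omega)) (by omega)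
      (fun k _ => (hS _).1) (fun k _ => (hS _).2) hxy (by simpa using hA1)
      (by simpa [show 1 + (n - 2 - 1) = n - 2 by omega] using hBn)
    rcases hk with hk | hk
    · have := hA (1 + k) (by omega) hk; omega
    · have := hB (1 + k) (by omega) hk; omega
  · obtain ⟨k, hk0, hkm, hk⟩ := hG.exists_interior_adj_of_adj_ends
      (hpath 1 (n - 1) le_rfl (by omega) (by omega) (by omega) fun _ => hBn) (by omega)
      (fun k _ => (hS _).1) (by simpa using hA1)
      (by simpa [show 1 + (n - 1 - 1) = n - 1 by omega] using hx)
    have := hA (1 + k) (by omega) hk; omega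
  · obtain ⟨k, hk0, hkm, hk⟩ := hG.exists_interior_adj_of_adj_ends
      (hpath 0 (n - 2) (by omega) le_rfl (by omega) (fun _ => hA1) (by omega)) (by omega)
      (fun k _ => (hS _).2) (by simpa using hy) (by simpa using hBn)
    have := hB (0 + k) (by omega) hk; omega
  · obtain ⟨k, hk0, hkm, hk⟩ := hG.exists_interior_adj_of_edge_adj_ends
      (hpath 0 (n - 1) (by omega) (by omega) (by omega) (fun _ => hA1) fun _ => hBn) (by omega)
      (fun k _ => (hS _).2) (fun k _ => (hS _).1) hxy.symm (by simpa using hy) (by simpa using hx)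
    rcases hk with hk | hk
    · obtain rfl : k = n - 2 := by have := hB (0 + k) (by omega) hk; omega
      exact hBn (by simpa using hk)
    · obtain rfl : k = 1 := by have := hA (0 + k) (by omega) hk; omega
      exact hA1 hk

lemma not_isInducedCycleSeq_tildeGraph (hG : Chordal G) (hxy : G.Adj x y) (hn : 5 ≤ n)
    (hS : ∀ k, f k ≠ x ∧ f k ≠ y) (hf : IsInducedCycleSeq (tildeGraph G x y) n f) : False := by
  by_cases hall : ∀ a < n, ∀ b < n, CycAdj n a b → G.Adj (f a) (f b)
  · refine hG.not_isInducedCycleSeq (by omega)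
      ⟨hf.1, fun a ha b hb => ⟨fun h => ?_, hall a ha b hb⟩⟩
    exact (hf.adj_or_cross_iff_of_tildeGraph hS ha hb fun hab => h.ne (congrArg f hab)).1 (.inl h)
  obtain ⟨a, ha, b, hb, hab, hnG, horient⟩ : ∃ a < n, ∃ b < n, CycAdj n a b ∧
      ¬G.Adj (f a) (f b) ∧ (a + 1 = b ∨ a + 1 = n ∧ b = 0) := by
    push Not at hall
    obtain ⟨a, ha, b, hb, hab, hnG⟩ := hall
    by_cases h : a + 1 = b ∨ a + 1 = n ∧ b = 0
    · exact ⟨a, ha, b, hb, hab, hnG, h⟩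
    · exact ⟨b, hb, a, ha, cycAdj_comm.1 hab, fun h' => hnG h'.symm,
        by unfold CycAdj at hab; omega⟩
  have hg := hf.rotate hb
  have hg0 : (0 + b) % n = b := by rw [zero_add, Nat.mod_eq_of_lt hb]
  have hgn : (n - 1 + b) % n = a := sub_one_add_mod_of_succ ha horient
  have hwrap : ¬G.Adj (f ((0 + b) % n)) (f ((n - 1 + b) % n)) := by
    rw [hg0, hgn]; exact fun h => hnG h.symm
  rcases (hf.adj_or_cross_iff_of_tildeGraph hS ha hb (by unfold CycAdj at hab; omega)).2 hab with
    h | ⟨hxa, hyb⟩ | ⟨hxb, hya⟩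
  · exact hnG h
  · exact hG.not_isInducedCycleSeq_tildeGraph_of_cross_last_zero hxy hn (fun k => hS _) hg
      (by rwa [hgn]) (by rwa [hg0]) hwrap
  · rw [tildeGraph_comm] at hg
    exact hG.not_isInducedCycleSeq_tildeGraph_of_cross_last_zero hxy.symm hn
      (fun k => (hS _).symm) hg (by rwa [hgn]) (by rwa [hg0]) hwrap

end Chordal

namespace IsInducedCycleSeq

lemma adj_or_cross_iff_of_compl_tildeGraph
    (hf : IsInducedCycleSeq (tildeGraph G x y)ᶜ n f)
    (hS : ∀ k, f k ≠ x ∧ f k ≠ y) {a b : ℕ} (ha : a < n) (hb : b < n) (hab : a ≠ b) :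
    (G.Adj (f a) (f b) ∨ G.Adj x (f a) ∧ G.Adj y (f b) ∨ G.Adj x (f b) ∧ G.Adj y (f a)) ↔
      ¬CycAdj n a b := by
  rw [← hf.adj_iff_of_compl ha hb hab, tildeGraph_adj (hS a) (hS b)]
  have := hf.apply_ne ha hb hab
  tauto

lemma not_adj_and_not_cross_of_compl_tildeGraph (hf : IsInducedCycleSeq (tildeGraph G x y)ᶜ n f)
    (hS : ∀ k, f k ≠ x ∧ f k ≠ y) {a b : ℕ} (ha : a < n) (hb : b < n) (hab : CycAdj n a b) :
    ¬G.Adj (f a) (f b) ∧ ¬(G.Adj x (f a) ∧ G.Adj y (f b)) := by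
  have hne : a ≠ b := by
    rintro rfl
    exact SimpleGraph.irrefl _ ((hf.2 a ha a ha).2 hab)
  have := (hf.adj_or_cross_iff_of_compl_tildeGraph hS ha hb hne).not_left.2 hab
  tauto

lemma exists_neither_between_of_compl_tildeGraph
    (hf : IsInducedCycleSeq (tildeGraph G x y)ᶜ n f) (hS : ∀ k, f k ≠ x ∧ f k ≠ y) {s t : ℕ}
    (hst : s < t) (ht : t < n)
    (h : G.Adj x (f s) ∧ G.Adj y (f t) ∨ G.Adj x (f t) ∧ G.Adj y (f s)) :
    ∃ k, s < k ∧ k < t ∧ ¬G.Adj x (f k) ∧ ¬G.Adj y (f k) := by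
  rcases h with ⟨hxs, hyt⟩ | ⟨hxt, hys⟩
  · exact exists_neither_between (A := fun k => G.Adj x (f k)) (B := fun k => G.Adj y (f k))
      hxs hyt hst fun k _ hk => (hf.not_adj_and_not_cross_of_compl_tildeGraph hS (by omega)
        (by omega) (by unfold CycAdj; omega)).2
  · obtain ⟨k, hk⟩ := exists_neither_between (A := fun k => G.Adj y (f k))
      (B := fun k => G.Adj x (f k)) hys hxt hst fun k _ hk h' =>
        (hf.not_adj_and_not_cross_of_compl_tildeGraph hS (a := k + 1) (b := k) (by omega)
          (by omega) (by unfold CycAdj; omega)).2 h'.symm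
    exact ⟨k, hk.1, hk.2.1, hk.2.2.2, hk.2.2.1⟩

lemma adj_of_compl_tildeGraph_of_neither (hf : IsInducedCycleSeq (tildeGraph G x y)ᶜ n f)
    (hS : ∀ k, f k ≠ x ∧ f k ≠ y) {a b : ℕ} (ha : a < n) (hb : b < n) (hab : a ≠ b)
    (hnab : ¬CycAdj n a b) (hxa : ¬G.Adj x (f a)) (hya : ¬G.Adj y (f a)) : G.Adj (f a) (f b) := by
  have := (hf.adj_or_cross_iff_of_compl_tildeGraph hS ha hb hab).2 hnab
  tauto

end IsInducedCycleSeq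

namespace Chordal

lemma antihole_cycAdj_of_neither (hG : Chordal G) (hxy : G.Adj x y)
    (hS : ∀ k, f k ≠ x ∧ f k ≠ y) (hf : IsInducedCycleSeq (tildeGraph G x y)ᶜ n f) {d k : ℕ}
    (hd : 2 ≤ d) (hdn : d + 2 ≤ n) (hx : G.Adj x (f 0)) (hy : G.Adj y (f d))
    (h0d : ¬G.Adj (f 0) (f d)) (hk : k < n) (hkx : ¬G.Adj x (f k)) (hky : ¬G.Adj y (f k)) :
    CycAdj n 0 k ∨ CycAdj n k d := by
  by_contra! H
  have hk0 : k ≠ 0 := by rintro rfl; exact hkx hx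
  have hkd : k ≠ d := by rintro rfl; exact hky hy
  obtain ⟨j, hj0, hj2, hj⟩ := hG.exists_interior_adj_of_edge_adj_ends
    (isInducedPathSeq_three
      (hf.adj_of_compl_tildeGraph_of_neither hS hk (by omega) hk0 (cycAdj_comm.not.1 H.1) hkx
        hky).symm
      (hf.adj_of_compl_tildeGraph_of_neither hS hk (by omega) hkd H.2 hkx hky) h0d
      (hf.apply_ne (by omega) (by omega) (by omega))) le_rfl
    (fun j hj => by interval_cases j <;> simp [hS]) (fun j hj => by interval_cases j <;> simp [hS])
    hxy (by simpa using hx) (by simpa using hy)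
  obtain rfl : j = 1 := by omega
  simp only [List.getD_cons_succ, List.getD_cons_zero] at hj
  tauto

lemma antihole_false_of_neither_path (hG : Chordal G) (hxy : G.Adj x y)
    (hS : ∀ k, f k ≠ x ∧ f k ≠ y) (hf : IsInducedCycleSeq (tildeGraph G x y)ᶜ n f) {d a b : ℕ}
    (hd : 2 ≤ d) (hdn : d + 2 ≤ n) (hx : G.Adj x (f 0)) (hy : G.Adj y (f d))
    (h0d : ¬G.Adj (f 0) (f d)) (hax : ¬G.Adj x (f a)) (hay : ¬G.Adj y (f a))
    (hbx : ¬G.Adj x (f b)) (hby : ¬G.Adj y (f b)) (ha : a < n := by omega)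
    (hb : b < n := by omega) (hab' : a ≠ b := by omega)
    (h0a : ¬CycAdj n 0 a := by unfold CycAdj; omega) (h0b : CycAdj n 0 b := by unfold CycAdj; omega)
    (hab : ¬CycAdj n a b := by unfold CycAdj; omega) (had : CycAdj n a d := by unfold CycAdj; omega)
    (hbd : ¬CycAdj n b d := by unfold CycAdj; omega) : False := by
  have ha0 : a ≠ 0 := by rintro rfl; exact hax hx
  have hb0 : b ≠ 0 := by rintro rfl; exact hbx hx
  have had' : a ≠ d := by rintro rfl; exact hay hy
  have hbd' : b ≠ d := by rintro rfl; exact hby hy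
  obtain ⟨j, hj0, hj3, hj⟩ := hG.exists_interior_adj_of_edge_adj_ends
    (isInducedPathSeq_four
      (hf.adj_of_compl_tildeGraph_of_neither hS ha (by omega) ha0 (cycAdj_comm.not.1 h0a) hax
        hay).symm
      (hf.adj_of_compl_tildeGraph_of_neither hS ha hb hab' hab hax hay)
      (hf.adj_of_compl_tildeGraph_of_neither hS hb (by omega) hbd' hbd hbx hby)
      (hf.not_adj_and_not_cross_of_compl_tildeGraph hS (by omega) hb h0b).1 h0d
      (hf.not_adj_and_not_cross_of_compl_tildeGraph hS ha (by omega) had).1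
      (hf.apply_ne (by omega) hb hb0.symm) (hf.apply_ne (by omega) (by omega) (by omega))
      (hf.apply_ne ha (by omega) had'))
    (by omega) (fun j hj => by interval_cases j <;> simp [hS])
    (fun j hj => by interval_cases j <;> simp [hS])
    hxy (by simpa using hx) (by simpa using hy)
  interval_cases j <;> simp only [List.getD_cons_succ, List.getD_cons_zero] at hj <;> tauto

lemma antihole_false_of_neither_one_last (hG : Chordal G) (hxy : G.Adj x y)
    (hS : ∀ k, f k ≠ x ∧ f k ≠ y) (hf : IsInducedCycleSeq (tildeGraph G x y)ᶜ n f) {d : ℕ}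
    (hd : 2 ≤ d) (hdn : d + 2 ≤ n) (hn : 6 ≤ n) (hx : G.Adj x (f 0)) (hy : G.Adj y (f d))
    (h0d : ¬G.Adj (f 0) (f d)) (h1 : ¬G.Adj x (f 1) ∧ ¬G.Adj y (f 1))
    (hl : ¬G.Adj x (f (n - 1)) ∧ ¬G.Adj y (f (n - 1))) : False := by
  by_cases hmid : ∃ k, 2 ≤ k ∧ k + 2 ≤ n ∧ ¬G.Adj x (f k) ∧ ¬G.Adj y (f k)
  · obtain ⟨k, hk2, hkn, hkx, hky⟩ := hmid
    have hkd := (hG.antihole_cycAdj_of_neither hxy hS hf hd hdn hx hy h0d (by omega) hkx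
      hky).resolve_left (by unfold CycAdj; omega)
    unfold CycAdj at hkd
    -- Take for `b` whichever of `1`, `n - 1` is not next to `d` or `k` on the cycle.
    by_cases hb : d ≠ 2 ∧ k ≠ 2
    · exact hG.antihole_false_of_neither_path hxy hS hf hd hdn hx hy h0d (a := k) (b := 1)
        hkx hky h1.1 h1.2
    · exact hG.antihole_false_of_neither_path hxy hS hf hd hdn hx hy h0d (a := k) (b := n - 1)
        hkx hky hl.1 hl.2
  have h2 : G.Adj (f 2) (f (n - 2)) := by
    rcases (hf.adj_or_cross_iff_of_compl_tildeGraph hS (a := 2) (b := n - 2) (by omega) (by omega)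
      (by omega)).2 (by unfold CycAdj; omega) with h | h
    · exact h
    · obtain ⟨k, hk⟩ := hf.exists_neither_between_of_compl_tildeGraph hS (by omega) (by omega) h
      exact (hmid ⟨k, by omega, by omega, hk.2.2⟩).elim
  have hadj := fun i j (hi : i < n) (hj : j < n) (hij : i ≠ j) (hnij : ¬CycAdj n i j)
    (hix : ¬G.Adj x (f i) ∧ ¬G.Adj y (f i)) =>
    hf.adj_of_compl_tildeGraph_of_neither hS hi hj hij hnij hix.1 hix.2
  rcases hG.adj_or_adj_of_cycle_four
      (hadj 1 (n - 1) (by omega) (by omega) (by omega) (by unfold CycAdj; omega) h1)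
      (hadj (n - 1) 2 (by omega) (by omega) (by omega) (by unfold CycAdj; omega) hl) h2
      (hadj 1 (n - 2) (by omega) (by omega) (by omega) (by unfold CycAdj; omega) h1).symm
      (hf.apply_ne (by omega) (by omega) (by omega))
      (hf.apply_ne (a := n - 1) (b := n - 2) (by omega) (by omega) (by omega)) with h | h
  · exact (hf.not_adj_and_not_cross_of_compl_tildeGraph hS (a := 1) (b := 2) (by omega)
      (by omega) (by unfold CycAdj; omega)).1 h
  · exact (hf.not_adj_and_not_cross_of_compl_tildeGraph hS (a := n - 1) (b := n - 2) (by omega)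
      (by omega) (by unfold CycAdj; omega)).1 h

lemma antihole_false_of_neither_pred_succ (hG : Chordal G) (hxy : G.Adj x y)
    (hS : ∀ k, f k ≠ x ∧ f k ≠ y) (hf : IsInducedCycleSeq (tildeGraph G x y)ᶜ n f) {d : ℕ}
    (hd : 2 ≤ d) (hdn : d + 2 ≤ n) (hn : 6 ≤ n) (hx : G.Adj x (f 0)) (hy : G.Adj y (f d))
    (h0d : ¬G.Adj (f 0) (f d)) (hp : ¬G.Adj x (f (d - 1)) ∧ ¬G.Adj y (f (d - 1)))
    (hs : ¬G.Adj x (f (d + 1)) ∧ ¬G.Adj y (f (d + 1))) : False := by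
  -- This is the configuration of `antihole_false_of_neither_one_last` seen from `f d`, with the
  -- roles of `x` and `y` exchanged.
  have hg := hf.rotate (i := d) (by omega)
  rw [tildeGraph_comm] at hg
  have e0 : (0 + d) % n = d := by rw [zero_add, Nat.mod_eq_of_lt (by omega)]
  have ed : (n - d + d) % n = 0 := by rw [Nat.sub_add_cancel (by omega), Nat.mod_self]
  have e1 : (1 + d) % n = d + 1 := by rw [Nat.mod_eq_of_lt (by omega)]; omega
  have el : (n - 1 + d) % n = d - 1 := by
    rw [show n - 1 + d = d - 1 + n by omega, Nat.add_mod_right, Nat.mod_eq_of_lt (by omega)]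
  exact hG.antihole_false_of_neither_one_last hxy.symm (fun k => (hS _).symm) hg
    (d := n - d) (by omega) (by omega) hn (by rwa [e0]) (by rwa [ed])
    (by rwa [e0, ed, G.adj_comm]) (by rw [e1]; exact hs.symm) (by rw [el]; exact hp.symm)

lemma antihole_false_of_cross (hG : Chordal G) (hxy : G.Adj x y)
    (hS : ∀ k, f k ≠ x ∧ f k ≠ y) (hf : IsInducedCycleSeq (tildeGraph G x y)ᶜ n f) {d : ℕ}
    (hd : 2 ≤ d) (hdn : d + 2 ≤ n) (hn : 6 ≤ n) (hx : G.Adj x (f 0)) (hy : G.Adj y (f d))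
    (h0d : ¬G.Adj (f 0) (f d)) : False := by
  obtain ⟨k₁, hk₁0, hk₁d, hk₁x, hk₁y⟩ :=
    hf.exists_neither_between_of_compl_tildeGraph hS (by omega) (by omega) (.inl ⟨hx, hy⟩)
  obtain ⟨k₂, hk₂d, hk₂n, hk₂x, hk₂y⟩ :
      ∃ k, d < k ∧ k < n ∧ ¬G.Adj x (f k) ∧ ¬G.Adj y (f k) := by
    by_cases hxl : G.Adj x (f (n - 1))
    · obtain ⟨k, hk⟩ :=
        hf.exists_neither_between_of_compl_tildeGraph hS (by omega) (by omega) (.inr ⟨hxl, hy⟩)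
      exact ⟨k, hk.1, by omega, hk.2.2⟩
    · exact ⟨n - 1, by omega, by omega, hxl, fun h =>
        (hf.not_adj_and_not_cross_of_compl_tildeGraph hS (by omega) (by omega)
          (by unfold CycAdj; omega)).2 ⟨hx, h⟩⟩
  have hnear := fun k (hk : k < n) hkx hky =>
    hG.antihole_cycAdj_of_neither hxy hS hf hd hdn hx hy h0d hk hkx hky
  have hk₁ : k₁ = 1 ∨ k₁ = d - 1 := by
    have := hnear k₁ (by omega) hk₁x hk₁y; unfold CycAdj at this; omega
  have hk₂ : k₂ = d + 1 ∨ k₂ = n - 1 := by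
    have := hnear k₂ (by omega) hk₂x hk₂y; unfold CycAdj at this; omega
  by_cases h1 : (¬G.Adj x (f 1) ∧ ¬G.Adj y (f 1)) ∧
      (¬G.Adj x (f (n - 1)) ∧ ¬G.Adj y (f (n - 1)))
  · exact hG.antihole_false_of_neither_one_last hxy hS hf hd hdn hn hx hy h0d h1.1 h1.2
  by_cases h2 : (¬G.Adj x (f (d - 1)) ∧ ¬G.Adj y (f (d - 1))) ∧
      (¬G.Adj x (f (d + 1)) ∧ ¬G.Adj y (f (d + 1)))
  · exact hG.antihole_false_of_neither_pred_succ hxy hS hf hd hdn hn hx hy h0d h2.1 h2.2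
  rcases hk₁ with rfl | rfl <;> rcases hk₂ with rfl | rfl
  · have hd2 : d ≠ 2 := by rintro rfl; exact h2 ⟨⟨hk₁x, hk₁y⟩, ⟨hk₂x, hk₂y⟩⟩
    have hdn' : d + 2 ≠ n := fun h =>
      h1 ⟨⟨hk₁x, hk₁y⟩, by rw [show n - 1 = d + 1 by omega]; exact ⟨hk₂x, hk₂y⟩⟩
    exact hG.antihole_false_of_neither_path hxy hS hf hd hdn hx hy h0d (a := d + 1) (b := 1)
      hk₂x hk₂y hk₁x hk₁y
  · exact h1 ⟨⟨hk₁x, hk₁y⟩, ⟨hk₂x, hk₂y⟩⟩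
  · exact h2 ⟨⟨hk₁x, hk₁y⟩, ⟨hk₂x, hk₂y⟩⟩
  · have hd2 : d ≠ 2 := fun h =>
      h1 ⟨by rw [show 1 = d - 1 by omega]; exact ⟨hk₁x, hk₁y⟩, ⟨hk₂x, hk₂y⟩⟩
    have hdn' : d + 2 ≠ n := fun h =>
      h2 ⟨⟨hk₁x, hk₁y⟩, by rw [show d + 1 = n - 1 by omega]; exact ⟨hk₂x, hk₂y⟩⟩
    exact hG.antihole_false_of_neither_path hxy hS hf hd hdn hx hy h0d (a := d - 1) (b := n - 1)
      hk₁x hk₁y hk₂x hk₂y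

lemma not_isInducedCycleSeq_compl_tildeGraph (hG : Chordal G) (hxy : G.Adj x y)
    (hn : 6 ≤ n) (hS : ∀ k, f k ≠ x ∧ f k ≠ y)
    (hf : IsInducedCycleSeq (tildeGraph G x y)ᶜ n f) : False := by
  by_cases hall : ∀ a < n, ∀ b < n, a ≠ b → ¬CycAdj n a b → G.Adj (f a) (f b)
  · have hfar : ∀ a b, a + 2 ≤ b → b + 2 ≤ n + a → b < n → G.Adj (f a) (f b) :=
      fun a b h₁ h₂ hb => hall a (by omega) b hb (by omega) (by unfold CycAdj; omega)
    have hnext : ∀ a, a + 1 < n → ¬G.Adj (f a) (f (a + 1)) := fun a ha =>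
      (hf.not_adj_and_not_cross_of_compl_tildeGraph hS (by omega) ha (by unfold CycAdj; omega)).1
    rcases hG.adj_or_adj_of_cycle_four (hfar 0 3 (by omega) (by omega) (by omega))
        (hfar 1 3 (by omega) (by omega) (by omega)).symm (hfar 1 4 (by omega) (by omega) (by omega))
        (hfar 0 4 (by omega) (by omega) (by omega)).symm
        (hf.apply_ne (a := 0) (b := 1) (by omega) (by omega) (by omega))
        (hf.apply_ne (a := 3) (b := 4) (by omega) (by omega) (by omega)) with h | h
    exacts [hnext 0 (by omega) h, hnext 3 (by omega) h]
  obtain ⟨a, ha, b, hb, hab, hnG, hxa, hyb⟩ : ∃ a < n, ∃ b < n,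
      a ≠ b ∧ ¬G.Adj (f a) (f b) ∧ G.Adj x (f a) ∧ G.Adj y (f b) := by
    push Not at hall
    obtain ⟨a, ha, b, hb, hab, hnab, hnG⟩ := hall
    rcases (hf.adj_or_cross_iff_of_compl_tildeGraph hS ha hb hab).2 hnab with h | h | h
    · exact absurd h hnG
    · exact ⟨a, ha, b, hb, hab, hnG, h⟩
    · exact ⟨b, hb, a, ha, hab.symm, fun h' => hnG h'.symm, h⟩
  have hg := hf.rotate ha
  have e0 : (0 + a) % n = a := by rw [zero_add, Nat.mod_eq_of_lt ha]
  have ed := add_sub_mod_add_mod ha hb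
  set d := (b + n - a) % n
  have hd : d < n := Nat.mod_lt _ (by omega)
  have hd0 : d ≠ 0 := by rintro hd0; rw [hd0, e0] at ed; exact hab ed
  have hcyc : ¬CycAdj n 0 d :=
    (hg.adj_or_cross_iff_of_compl_tildeGraph (fun k => hS _) (by omega) hd hd0.symm).1
      (.inr (.inl ⟨by rwa [e0], by rwa [ed]⟩))
  exact hG.antihole_false_of_cross hxy (fun k => hS _) hg (d := d)
    (by unfold CycAdj at hcyc; omega) (by unfold CycAdj at hcyc; omega) hn (by rwa [e0])
    (by rwa [ed]) (by rwa [e0, ed])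

end Chordal

end TildeGraph

/-- If `G` is chordal and `{x,y} ∈ E(G)`, then `G~` (restricted to `V(G) \ {x,y}`)
is weakly chordal: neither it nor its complement has an induced cycle of length `≥ 5`. -/
theorem tildeGraph_weaklyChordal (G : SimpleGraph V) (x y : V)
    (hchordal : Chordal G) (hxy : G.Adj x y) :
    (∀ n : ℕ, 5 ≤ n →
      ¬ HasInducedCycle
        (SimpleGraph.induce {v : V | v ≠ x ∧ v ≠ y} (tildeGraph G x y)) n) ∧
    (∀ n : ℕ, 5 ≤ n →
      ¬ HasInducedCycle
        (SimpleGraph.induce {v : V | v ≠ x ∧ v ≠ y} (tildeGraph G x y))ᶜ n) := by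
  constructor
  · intro n hn hc
    obtain ⟨f, hf⟩ := hc.exists_isInducedCycleSeq (by omega)
    exact hchordal.not_isInducedCycleSeq_tildeGraph hxy hn (fun k => (f k).2)
      (hf.map (SimpleGraph.Embedding.induce _))
  · intro n hn hc
    obtain ⟨f, hf⟩ := hc.exists_isInducedCycleSeq (by omega)
    have hf' := hf.map (SimpleGraph.Embedding.complEquiv (SimpleGraph.Embedding.induce _))
    rcases (show n = 5 ∨ 6 ≤ n by omega) with rfl | hn6
    · exact hchordal.not_isInducedCycleSeq_tildeGraph hxy le_rfl (fun k => (f _).2)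
        hf'.of_compl_five
    · exact hchordal.not_isInducedCycleSeq_compl_tildeGraph hxy hn6 (fun k => (f k).2) hf'
end

section
/- Let H and H' be hypergraphs with at least one edge each and disjoint vertex sets, and let k be an integer with ν(H)+1 ≤ k ≤ ν(H)+ν(H'). Then the k-th square-free power of the edge ideal of the disjoint union decomposes as I(H ⊔ H')^{[k]} = J + K, where J = I(H)^{[ν(H)]}·I(H')^{[k−ν(H)]} and K = Σ_{l} I(H)^{[l]}·I(H')^{[k−l]} with l ranging over k−ν(H') ≤ l ≤ ν(H)−1, and moreover J ∩ K = I(H)^{[ν(H)]}·I(H')^{[k−ν(H)+1]}. -/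
/-
The monomial of a matching `M` of `H ⊔ H'` factors as `x_{M ∩ E(H)} · x_{M ∩ E(H')}`, so
`I(H ⊔ H')^{[k]} = ∑ₗ I(H)^{[l]} I(H')^{[k-l]}`, and only `k - ν(H') ≤ l ≤ ν(H)` contribute;
the term `l = ν(H)` is `J` and the others make up `K`. Square-free powers decrease with the
exponent, so `K ⊆ I(H')^{[k-ν(H)+1]}`, and monomial ideals in disjoint sets of variables
intersect in their product (the lcm of coprime monomials is their product). Hence
`J ∩ K ⊆ I(H)^{[ν(H)]} ∩ I(H')^{[k-ν(H)+1]} = I(H)^{[ν(H)]} I(H')^{[k-ν(H)+1]}`; conversely this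
product lies in `J` and in the term `l = ν(H) - 1` of `K`, or vanishes when `k = ν(H) + ν(H')`.
-/

open scoped Classical

variable {V : Type*} [DecidableEq V]

/-- The `k`-th square-free power of the edge ideal of the hypergraph with edge set `E`:
it is generated by the products `x_{E₁} ⋯ x_{E_k}` over all matchings `{E₁, ..., E_k}`
of size `k`.  For `k = 0` this is the unit ideal, matching the convention
`I^{[l]} = R` for `l ≤ 0` (`ℕ`-subtraction truncates negative superscripts to `0`). -/
noncomputable def sqfreePower (K : Type*) [Field K] (E : Finset (Finset V)) (k : ℕ) :
    Ideal (MvPolynomial V K) :=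
  Ideal.span {p : MvPolynomial V K | ∃ M : Finset (Finset V),
    IsMatching E M ∧ M.card = k ∧ p = ∏ e ∈ M, ∏ v ∈ e, MvPolynomial.X v}

open MvPolynomial

section MonomialIdeal

variable {σ R : Type*} [CommSemiring R]

theorem span_monomial_image_inf (A B : Set (σ →₀ ℕ)) :
    Ideal.span ((monomial · (1 : R)) '' A) ⊓ Ideal.span ((monomial · (1 : R)) '' B) =
      Ideal.span ((monomial · (1 : R)) '' Set.image2 (· ⊔ ·) A B) := by
  refine le_antisymm (fun p hp => ?_) (Ideal.span_le.2 ?_)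
  · obtain ⟨hA, hB⟩ := Submodule.mem_inf.1 hp
    rw [mem_ideal_span_monomial_image] at hA hB ⊢
    intro d hd
    obtain ⟨a, ha, had⟩ := hA d hd
    obtain ⟨b, hb, hbd⟩ := hB d hd
    exact ⟨a ⊔ b, Set.mem_image2_of_mem ha hb, sup_le had hbd⟩
  · rintro _ ⟨_, ⟨a, ha, b, hb, rfl⟩, rfl⟩
    refine ⟨?_, ?_⟩ <;> rw [SetLike.mem_coe, mem_ideal_span_monomial_image] <;>
      intro d hd <;> rw [Finset.mem_singleton.1 (support_monomial_subset hd)]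
    exacts [⟨a, ha, le_sup_left⟩, ⟨b, hb, le_sup_right⟩]

theorem span_monomial_image_mul (A B : Set (σ →₀ ℕ)) :
    Ideal.span ((monomial · (1 : R)) '' A) * Ideal.span ((monomial · (1 : R)) '' B) =
      Ideal.span ((monomial · (1 : R)) '' Set.image2 (· + ·) A B) := by
  rw [Ideal.span_mul_span', Set.image_image2, ← Set.image2_mul, Set.image2_image_left,
    Set.image2_image_right]
  simp only [monomial_mul, mul_one]

theorem span_monomial_image_inf_eq_mul {A B : Set (σ →₀ ℕ)}
    (h : ∀ a ∈ A, ∀ b ∈ B, Disjoint a b) :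
    Ideal.span ((monomial · (1 : R)) '' A) ⊓ Ideal.span ((monomial · (1 : R)) '' B) =
      Ideal.span ((monomial · (1 : R)) '' A) * Ideal.span ((monomial · (1 : R)) '' B) := by
  rw [span_monomial_image_inf, span_monomial_image_mul]
  congr 2
  refine Set.image2_congr fun a ha b hb => ?_
  ext v
  have := DFunLike.congr_fun (disjoint_iff.1 (h a ha b hb)) v
  simp only [Finsupp.inf_apply, bot_eq_zero, Finsupp.coe_zero, Pi.zero_apply] at this
  simp only [Finsupp.sup_apply, Finsupp.add_apply]
  omega

end MonomialIdeal

section Matchings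

omit [DecidableEq V]

variable {E M N : Finset (Finset V)}

theorem IsMatching.subset (hM : IsMatching E M) (hNM : N ⊆ M) : IsMatching E N :=
  ⟨hNM.trans hM.1, fun e he f hf => hM.2 e (hNM he) f (hNM hf)⟩

theorem card_le_matchNum (hM : IsMatching E M) : M.card ≤ matchNum E :=
  le_csSup ⟨E.card, fun _ ⟨_, hN, hcard⟩ => hcard ▸ Finset.card_le_card hN.1⟩ ⟨M, hM, rfl⟩

theorem matchNum_pos (hE : E.Nonempty) : 0 < matchNum E := by
  obtain ⟨e, he⟩ := hE
  exact card_le_matchNum (M := {e}) ⟨Finset.singleton_subset_iff.2 he, by simp⟩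

theorem disjoint_of_forall_disjoint {E₁ E₂ : Finset (Finset V)}
    (hne₁ : ∀ e ∈ E₁, e.Nonempty) (hdisj : ∀ e ∈ E₁, ∀ f ∈ E₂, Disjoint e f) : Disjoint E₁ E₂ :=
  Finset.disjoint_left.2 fun e he₁ he₂ =>
    (hne₁ e he₁).ne_empty ((Finset.disjoint_self_iff_empty e).1 (hdisj e he₁ e he₂))

theorem prod_prod_X_eq_monomial (R : Type*) [CommSemiring R] (M : Finset (Finset V)) :
    (∏ e ∈ M, ∏ v ∈ e, X v : MvPolynomial V R) =
      monomial (∑ e ∈ M, ∑ v ∈ e, Finsupp.single v 1) 1 := by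
  simp only [monomial_sum_one]
  rfl

variable (K : Type*) [Field K]

theorem prod_mem_sqfreePower (hM : IsMatching E M) :
    (∏ e ∈ M, ∏ v ∈ e, X v : MvPolynomial V K) ∈ sqfreePower K E M.card :=
  Ideal.subset_span ⟨M, hM, rfl, rfl⟩

theorem sqfreePower_eq_bot {k : ℕ} (hk : matchNum E < k) : sqfreePower K E k = ⊥ :=
  Ideal.span_eq_bot.2 fun _ ⟨M, hM, hcard, _⟩ => absurd (card_le_matchNum hM) (by omega)

theorem sqfreePower_eq_span_monomial (E : Finset (Finset V)) (k : ℕ) :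
    sqfreePower K E k = Ideal.span ((monomial · (1 : K)) ''
      ((fun M => ∑ e ∈ M, ∑ v ∈ e, Finsupp.single v 1) '' {M | IsMatching E M ∧ M.card = k})) := by
  rw [sqfreePower, Set.image_image]
  congr 1
  ext p
  simp only [Set.mem_ofPred_eq, Set.mem_image, prod_prod_X_eq_monomial, eq_comm (a := p), and_assoc]

end Matchings

section DisjointUnion

variable {E₁ E₂ : Finset (Finset V)}

theorem IsMatching.union {M₁ M₂ : Finset (Finset V)} (h₁ : IsMatching E₁ M₁)
    (h₂ : IsMatching E₂ M₂) (hdisj : ∀ e ∈ E₁, ∀ f ∈ E₂, Disjoint e f) :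
    IsMatching (E₁ ∪ E₂) (M₁ ∪ M₂) := by
  refine ⟨Finset.union_subset_union h₁.1 h₂.1, fun e he f hf hne => ?_⟩
  rcases Finset.mem_union.1 he with he | he <;> rcases Finset.mem_union.1 hf with hf | hf
  · exact h₁.2 e he f hf hne
  · exact hdisj e (h₁.1 he) f (h₂.1 hf)
  · exact (hdisj f (h₁.1 hf) e (h₂.1 he)).symm
  · exact h₂.2 e he f hf hne

theorem support_sum_sum_single_subset (M : Finset (Finset V)) :
    (∑ e ∈ M, ∑ v ∈ e, Finsupp.single v 1).support ⊆ M.biUnion id :=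
  Finsupp.support_finsetSum.trans <| Finset.biUnion_mono fun _ _ =>
    Finsupp.support_finsetSum.trans fun _ => by simp

variable (K : Type*) [Field K]

theorem sqfreePower_antitone (E : Finset (Finset V)) : Antitone (sqfreePower K E) := by
  intro m l hml
  refine Ideal.span_le.2 ?_
  rintro _ ⟨M, hM, rfl, rfl⟩
  obtain ⟨N, hNM, rfl⟩ := Finset.exists_subset_card_eq hml
  rw [← Finset.prod_sdiff hNM]
  exact Ideal.mul_mem_left _ _ (prod_mem_sqfreePower K (hM.subset hNM))

theorem sqfreePower_mul_le_union (hE : Disjoint E₁ E₂)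
    (hdisj : ∀ e ∈ E₁, ∀ f ∈ E₂, Disjoint e f) (l m : ℕ) :
    sqfreePower K E₁ l * sqfreePower K E₂ m ≤ sqfreePower K (E₁ ∪ E₂) (l + m) := by
  rw [sqfreePower, sqfreePower, Ideal.span_mul_span', Ideal.span_le]
  rintro _ ⟨_, ⟨M₁, hM₁, rfl, rfl⟩, _, ⟨M₂, hM₂, rfl, rfl⟩, rfl⟩
  have hM : Disjoint M₁ M₂ := hE.mono hM₁.1 hM₂.1
  rw [← Finset.card_union_of_disjoint hM]
  simp only [← Finset.prod_union hM]
  exact prod_mem_sqfreePower K (hM₁.union hM₂ hdisj)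

theorem sqfreePower_union_eq_sum (hE : Disjoint E₁ E₂)
    (hdisj : ∀ e ∈ E₁, ∀ f ∈ E₂, Disjoint e f) (k : ℕ) :
    sqfreePower K (E₁ ∪ E₂) k =
      ∑ l ∈ Finset.range (k + 1), sqfreePower K E₁ l * sqfreePower K E₂ (k - l) := by
  refine le_antisymm (Ideal.span_le.2 ?_) ?_
  · rintro _ ⟨M, hM, rfl, rfl⟩
    have hM₁ : IsMatching E₁ (M.filter (· ∈ E₁)) :=
      ⟨fun e he => (Finset.mem_filter.1 he).2, (hM.subset (Finset.filter_subset _ _)).2⟩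
    have hM₂ : IsMatching E₂ (M.filter (· ∉ E₁)) := by
      refine ⟨fun e he => ?_, (hM.subset (Finset.filter_subset _ _)).2⟩
      obtain ⟨heM, he₁⟩ := Finset.mem_filter.1 he
      exact (Finset.mem_union.1 (hM.1 heM)).resolve_left he₁
    have hcard := Finset.card_filter_add_card_filter_not (s := M) (· ∈ E₁)
    have hl : (M.filter (· ∈ E₁)).card ∈ Finset.range (M.card + 1) :=
      Finset.mem_range.2 (by omega)
    rw [← Finset.prod_filter_mul_prod_filter_not M (· ∈ E₁)]
    refine Finset.single_le_sum (f := fun l => sqfreePower K E₁ l * sqfreePower K E₂ (M.card - l))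
      (fun _ _ => zero_le) hl (Ideal.mul_mem_mul (prod_mem_sqfreePower K hM₁) ?_)
    convert prod_mem_sqfreePower K hM₂ using 2
    omega
  · rw [Ideal.sum_eq_sup, Finset.sup_le_iff]
    intro l hl
    convert sqfreePower_mul_le_union K hE hdisj l (k - l)
    have := Finset.mem_range.1 hl
    omega

theorem sqfreePower_inf_eq_mul (hdisj : ∀ e ∈ E₁, ∀ f ∈ E₂, Disjoint e f) (l m : ℕ) :
    sqfreePower K E₁ l ⊓ sqfreePower K E₂ m = sqfreePower K E₁ l * sqfreePower K E₂ m := by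
  simp only [sqfreePower_eq_span_monomial]
  refine span_monomial_image_inf_eq_mul ?_
  rintro _ ⟨M₁, ⟨hM₁, -⟩, rfl⟩ _ ⟨M₂, ⟨hM₂, -⟩, rfl⟩
  refine Finsupp.disjoint_iff.2 (Disjoint.mono (support_sum_sum_single_subset M₁)
    (support_sum_sum_single_subset M₂) ?_)
  exact (Finset.disjoint_biUnion_left _ _ _).2 fun e he =>
    (Finset.disjoint_biUnion_right _ _ _).2 fun f hf => hdisj e (hM₁.1 he) f (hM₂.1 hf)

theorem sqfreePower_union_eq_sum_Icc (hE : Disjoint E₁ E₂)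
    (hdisj : ∀ e ∈ E₁, ∀ f ∈ E₂, Disjoint e f) {k : ℕ} (hk : matchNum E₁ ≤ k) :
    sqfreePower K (E₁ ∪ E₂) k = ∑ l ∈ Finset.Icc (k - matchNum E₂) (matchNum E₁),
      sqfreePower K E₁ l * sqfreePower K E₂ (k - l) := by
  rw [sqfreePower_union_eq_sum K hE hdisj]
  refine (Finset.sum_subset (fun l hl => ?_) fun l hl hl' => ?_).symm
  · rw [Finset.mem_Icc] at hl
    exact Finset.mem_range.2 (by omega)
  · rw [Finset.mem_range] at hl
    rw [Finset.mem_Icc, not_and_or] at hl'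
    rcases hl' with h | h
    · rw [sqfreePower_eq_bot K (E := E₂) (by omega), Ideal.mul_bot, Ideal.zero_eq_bot]
    · rw [sqfreePower_eq_bot K (E := E₁) (by omega), Ideal.bot_mul, Ideal.zero_eq_bot]

end DisjointUnion

theorem sqfreePower_disjUnion_betti_splitting_general (K : Type*) [Field K]
    (E₁ E₂ : Finset (Finset V))
    (hE₁ : E₁.Nonempty)
    (hne₁ : ∀ e ∈ E₁, e.Nonempty)
    (hdisj : ∀ e ∈ E₁, ∀ f ∈ E₂, Disjoint e f)
    (k : ℕ) (hk1 : matchNum E₁ + 1 ≤ k) (hk2 : k ≤ matchNum E₁ + matchNum E₂) :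
    sqfreePower K (E₁ ∪ E₂) k =
      sqfreePower K E₁ (matchNum E₁) * sqfreePower K E₂ (k - matchNum E₁) +
      ∑ l ∈ Finset.Icc (k - matchNum E₂) (matchNum E₁ - 1),
        sqfreePower K E₁ l * sqfreePower K E₂ (k - l) ∧
    (sqfreePower K E₁ (matchNum E₁) * sqfreePower K E₂ (k - matchNum E₁)) ⊓
      (∑ l ∈ Finset.Icc (k - matchNum E₂) (matchNum E₁ - 1),
        sqfreePower K E₁ l * sqfreePower K E₂ (k - l)) =
      sqfreePower K E₁ (matchNum E₁) * sqfreePower K E₂ (k - matchNum E₁ + 1) := by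
  have hE := disjoint_of_forall_disjoint hne₁ hdisj
  have hν₁ := matchNum_pos hE₁
  set ν₁ := matchNum E₁
  set ν₂ := matchNum E₂
  have hIcc : Finset.Icc (k - ν₂) ν₁ = insert ν₁ (Finset.Icc (k - ν₂) (ν₁ - 1)) := by
    ext l
    simp only [Finset.mem_insert, Finset.mem_Icc]
    omega
  refine ⟨?_, le_antisymm ?_ (le_inf ?_ ?_)⟩
  · rw [sqfreePower_union_eq_sum_Icc K hE hdisj (by omega), hIcc,
      Finset.sum_insert (by simp only [Finset.mem_Icc]; omega)]
  · calc _ ≤ sqfreePower K E₁ ν₁ ⊓ sqfreePower K E₂ (k - ν₁ + 1) := by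
          refine inf_le_inf Ideal.mul_le_left ?_
          rw [Ideal.sum_eq_sup, Finset.sup_le_iff]
          intro l hl
          rw [Finset.mem_Icc] at hl
          exact Ideal.mul_le_right.trans (sqfreePower_antitone K E₂ (by omega))
      _ = _ := sqfreePower_inf_eq_mul K hdisj _ _
  · exact Ideal.mul_mono_right (sqfreePower_antitone K E₂ (Nat.le_succ _))
  · rcases hk2.lt_or_eq with hk | hk
    · have hmem : ν₁ - 1 ∈ Finset.Icc (k - ν₂) (ν₁ - 1) := Finset.mem_Icc.2 ⟨by omega, le_rfl⟩
      refine le_trans ?_ (Finset.single_le_sum (fun _ _ => zero_le) hmem)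
      rw [show k - (ν₁ - 1) = k - ν₁ + 1 by omega]
      exact Ideal.mul_mono_left (sqfreePower_antitone K E₁ (Nat.sub_le _ _))
    · rw [sqfreePower_eq_bot K (E := E₂) (by omega), Ideal.mul_bot]
      exact bot_le

/-- Betti splitting decomposition of a square-free power of the edge ideal of a disjoint
union of hypergraphs: `I(H ⊔ H')^{[k]} = J + K` with
`J = I(H)^{[ν(H)]}·I(H')^{[k-ν(H)]}`, `K = ∑_{l} I(H)^{[l]}·I(H')^{[k-l]}` for
`k - ν(H') ≤ l ≤ ν(H) - 1`, and moreover
`J ∩ K = I(H)^{[ν(H)]}·I(H')^{[k-ν(H)+1]}`. -/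
theorem sqfreePower_disjUnion_betti_splitting (K : Type*) [Field K]
    (E₁ E₂ : Finset (Finset V))
    (hE₁ : E₁.Nonempty) (hE₂ : E₂.Nonempty)
    (hne₁ : ∀ e ∈ E₁, e.Nonempty) (hne₂ : ∀ e ∈ E₂, e.Nonempty)
    (hsimple₁ : ∀ e ∈ E₁, ∀ f ∈ E₁, e ⊆ f → e = f)
    (hsimple₂ : ∀ e ∈ E₂, ∀ f ∈ E₂, e ⊆ f → e = f)
    (hdisj : ∀ e ∈ E₁, ∀ f ∈ E₂, Disjoint e f)
    (k : ℕ) (hk1 : matchNum E₁ + 1 ≤ k) (hk2 : k ≤ matchNum E₁ + matchNum E₂) :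
    sqfreePower K (E₁ ∪ E₂) k =
      sqfreePower K E₁ (matchNum E₁) * sqfreePower K E₂ (k - matchNum E₁) +
      ∑ l ∈ Finset.Icc (k - matchNum E₂) (matchNum E₁ - 1),
        sqfreePower K E₁ l * sqfreePower K E₂ (k - l) ∧
    (sqfreePower K E₁ (matchNum E₁) * sqfreePower K E₂ (k - matchNum E₁)) ⊓
      (∑ l ∈ Finset.Icc (k - matchNum E₂) (matchNum E₁ - 1),
        sqfreePower K E₁ l * sqfreePower K E₂ (k - l)) =
      sqfreePower K E₁ (matchNum E₁) * sqfreePower K E₂ (k - matchNum E₁ + 1) :=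
  sqfreePower_disjUnion_betti_splitting_general K E₁ E₂ hE₁ hne₁ hdisj k hk1 hk2
end
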